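/- arXiv:0707.3271 — 2 statements merged into one kernel-verified Lean document; each statement's English description precedes it below -/
import Mathlib

section
/- For every ξ ∈ c₀* there exists ζ ∈ c₀* such that ξ_n ≤ (ζ_a)_n for all n, and such that for every η ∈ c₀* with ξ_n ≤ (η_a)_n for all n one has (ζ_a)_n ≤ (η_a)_n for all n. In other words, among all arithmetic means of c₀*-sequences that pointwise dominate ξ there is a pointwise smallest one. -/
/-!
Let `A` be the set of `η ∈ c₀*` whose means dominate `ξ`, and let `F m` be the infimum over
`A` of the partial sums `∑_{j<m} η j`. Since every `η ∈ A` is nonnegative and nonincreasing,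
each partial-sum sequence is nondecreasing and concave, hence so is `F`, with `F 0 = 0`. The
increments `ζ m = F (m + 1) - F m` therefore form a nonnegative nonincreasing sequence with
partial sums `F`, so `am ζ n = F (n + 1) / (n + 1)` is the pointwise infimum of the means of
`A`. This infimum still dominates `ξ`, and `ζ → 0` because `ζ n ≤ am ζ n ≤ am ξ n → 0`
(`ξ ∈ A`, and Cesàro means of a null sequence are null).
-/

/-- `ξ ∈ c₀*`: nonnegative, nonincreasing, converging to 0 (0-based indexing). -/
def IsC0Star (ξ : ℕ → ℝ) : Prop :=
  (∀ n, 0 ≤ ξ n) ∧ (∀ n, ξ (n + 1) ≤ ξ n) ∧ Filter.Tendsto ξ Filter.atTop (nhds 0)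

/-- The arithmetic mean `(ξ_a)_n = (1/n)∑_{j=1}^n ξ_j` (0-based indexing). -/
noncomputable def am (ξ : ℕ → ℝ) (n : ℕ) : ℝ :=
  (∑ j ∈ Finset.range (n + 1), ξ j) / (n + 1)

open Filter Finset Topology

lemma IsC0Star.antitone {ξ : ℕ → ℝ} (hξ : IsC0Star ξ) : Antitone ξ :=
  antitone_nat_of_succ_le hξ.2.1

lemma le_am_iff {ξ : ℕ → ℝ} {x : ℝ} {n : ℕ} :
    x ≤ am ξ n ↔ x * (n + 1) ≤ ∑ j ∈ range (n + 1), ξ j :=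
  le_div_iff₀ (by positivity)

lemma le_am_of_antitone {ξ : ℕ → ℝ} (hξ : Antitone ξ) (n : ℕ) : ξ n ≤ am ξ n := by
  rw [le_am_iff]
  have := card_nsmul_le_sum (range (n + 1)) ξ (ξ n)
    fun j hj => hξ (Nat.lt_succ_iff.mp (mem_range.mp hj))
  simpa [mul_comm] using this

lemma tendsto_am {ξ : ℕ → ℝ} {l : ℝ} (hξ : Tendsto ξ atTop (𝓝 l)) :
    Tendsto (am ξ) atTop (𝓝 l) := by
  have := (tendsto_add_atTop_iff_nat 1).mpr hξ.cesaro
  refine this.congr fun n => ?_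
  rw [am, div_eq_inv_mul]
  push_cast
  rfl

noncomputable def partialSumInf (A : Set (ℕ → ℝ)) (m : ℕ) : ℝ :=
  ⨅ η : A, ∑ j ∈ range m, (η : ℕ → ℝ) j

/-- Its means are the pointwise infimum of the means of the elements of `A`. -/
noncomputable def infMeanSeq (A : Set (ℕ → ℝ)) (m : ℕ) : ℝ :=
  partialSumInf A (m + 1) - partialSumInf A m

section partialSumInf

variable {A : Set (ℕ → ℝ)}

lemma partialSumInf_le (hA : ∀ η ∈ A, ∀ n, 0 ≤ η n) {η : ℕ → ℝ} (hη : η ∈ A) (m : ℕ) :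
    partialSumInf A m ≤ ∑ j ∈ range m, η j := by
  refine ciInf_le ⟨0, ?_⟩ (⟨η, hη⟩ : A)
  rintro _ ⟨⟨ν, hν⟩, rfl⟩
  exact sum_nonneg fun j _ => hA ν hν j

lemma le_partialSumInf (hne : A.Nonempty) {x : ℝ} {m : ℕ}
    (h : ∀ η ∈ A, x ≤ ∑ j ∈ range m, η j) : x ≤ partialSumInf A m :=
  have := hne.coe_sort
  le_ciInf fun η => h η η.2

lemma partialSumInf_zero (hA : ∀ η ∈ A, ∀ n, 0 ≤ η n) (hne : A.Nonempty) :
    partialSumInf A 0 = 0 := by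
  obtain ⟨η, hη⟩ := hne
  refine le_antisymm ?_ (le_partialSumInf ⟨η, hη⟩ fun _ _ => by simp)
  simpa using partialSumInf_le hA hη 0

lemma partialSumInf_le_succ (hA : ∀ η ∈ A, ∀ n, 0 ≤ η n) (hne : A.Nonempty) (m : ℕ) :
    partialSumInf A m ≤ partialSumInf A (m + 1) :=
  le_partialSumInf hne fun η hη => by
    rw [sum_range_succ]
    linarith [partialSumInf_le hA hη m, hA η hη m]

lemma partialSumInf_concave (hA : ∀ η ∈ A, ∀ n, 0 ≤ η n) (hA' : ∀ η ∈ A, Antitone η)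
    (hne : A.Nonempty) (m : ℕ) :
    partialSumInf A (m + 2) + partialSumInf A m ≤ 2 * partialSumInf A (m + 1) := by
  suffices (partialSumInf A (m + 2) + partialSumInf A m) / 2 ≤ partialSumInf A (m + 1) by
    linarith
  refine le_partialSumInf hne fun η hη => ?_
  have hsucc : η (m + 1) ≤ η m := hA' η hη m.le_succ
  have := partialSumInf_le hA hη (m + 2)
  have := partialSumInf_le hA hη m
  simp only [sum_range_succ] at *
  linarith

lemma sum_range_infMeanSeq (hA : ∀ η ∈ A, ∀ n, 0 ≤ η n) (hne : A.Nonempty) (m : ℕ) :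
    ∑ j ∈ range m, infMeanSeq A j = partialSumInf A m := by
  simp only [infMeanSeq]
  rw [sum_range_sub, partialSumInf_zero hA hne, sub_zero]

lemma am_infMeanSeq (hA : ∀ η ∈ A, ∀ n, 0 ≤ η n) (hne : A.Nonempty) (n : ℕ) :
    am (infMeanSeq A) n = partialSumInf A (n + 1) / (n + 1) := by
  rw [am, sum_range_infMeanSeq hA hne]

lemma infMeanSeq_nonneg (hA : ∀ η ∈ A, ∀ n, 0 ≤ η n) (hne : A.Nonempty) (m : ℕ) :
    0 ≤ infMeanSeq A m :=
  sub_nonneg.mpr (partialSumInf_le_succ hA hne m)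

lemma infMeanSeq_antitone (hA : ∀ η ∈ A, ∀ n, 0 ≤ η n) (hA' : ∀ η ∈ A, Antitone η)
    (hne : A.Nonempty) : Antitone (infMeanSeq A) :=
  antitone_nat_of_succ_le fun m => by
    have := partialSumInf_concave hA hA' hne m
    simp only [infMeanSeq]
    linarith

lemma am_infMeanSeq_le (hA : ∀ η ∈ A, ∀ n, 0 ≤ η n) {η : ℕ → ℝ} (hη : η ∈ A) (n : ℕ) :
    am (infMeanSeq A) n ≤ am η n := by
  rw [am_infMeanSeq hA ⟨η, hη⟩]
  exact div_le_div_of_nonneg_right (partialSumInf_le hA hη _) (by positivity)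

lemma le_am_infMeanSeq (hA : ∀ η ∈ A, ∀ n, 0 ≤ η n) (hne : A.Nonempty) {x : ℝ} {n : ℕ}
    (h : ∀ η ∈ A, x ≤ am η n) : x ≤ am (infMeanSeq A) n := by
  rw [am_infMeanSeq hA hne, le_div_iff₀ (by positivity)]
  exact le_partialSumInf hne fun η hη => le_am_iff.mp (h η hη)

end partialSumInf

/-- Among all arithmetic means of `c₀*`-sequences pointwise dominating `ξ`
there is a pointwise smallest one. -/
theorem stmt_2 (ξ : ℕ → ℝ) (hξ : IsC0Star ξ) :
    ∃ ζ : ℕ → ℝ, IsC0Star ζ ∧ (∀ n, ξ n ≤ am ζ n) ∧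
      ∀ η : ℕ → ℝ, IsC0Star η → (∀ n, ξ n ≤ am η n) → ∀ n, am ζ n ≤ am η n := by
  set A : Set (ℕ → ℝ) := {η | IsC0Star η ∧ ∀ n, ξ n ≤ am η n}
  have hξA : ξ ∈ A := ⟨hξ, le_am_of_antitone hξ.antitone⟩
  have hA : ∀ η ∈ A, ∀ n, 0 ≤ η n := fun η hη => hη.1.1
  have hA' : ∀ η ∈ A, Antitone η := fun η hη => hη.1.antitone
  have hζ_le : ∀ n, infMeanSeq A n ≤ am ξ n := fun n =>
    (le_am_of_antitone (infMeanSeq_antitone hA hA' ⟨ξ, hξA⟩) n).trans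
      (am_infMeanSeq_le hA hξA n)
  have hζ_lim : Tendsto (infMeanSeq A) atTop (𝓝 0) :=
    tendsto_of_tendsto_of_tendsto_of_le_of_le tendsto_const_nhds (tendsto_am hξ.2.2)
      (infMeanSeq_nonneg hA ⟨ξ, hξA⟩) hζ_le
  refine ⟨infMeanSeq A, ⟨infMeanSeq_nonneg hA ⟨ξ, hξA⟩,
    fun n => infMeanSeq_antitone hA hA' ⟨ξ, hξA⟩ n.le_succ, hζ_lim⟩,
    fun n => le_am_infMeanSeq hA ⟨ξ, hξA⟩ fun η hη => hη.2 n,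
    fun η hη hηξ => am_infMeanSeq_le hA ⟨hη, hηξ⟩⟩
end

section
/- Let η ∈ c₀* with η₁ > 0, and suppose that either (a) r(η_a) ≍ log, i.e., there exist c, C > 0 with c·log n ≤ (η_{a²})_n/(η_a)_n ≤ C·log n for all n ≥ 2; or (b) η is nonsummable and the principal ideals generated by η and by η̂ coincide, i.e., there exist m ∈ ℕ and C > 0 with η̂_n ≤ C·η_{⌈n/m⌉} and η_n ≤ C·η̂_{⌈n/m⌉} for all n. Then for every ξ ∈ c₀*: η_{a²} = O(ξ_{a²}) implies η_a = O(ξ_a). (This is the second-order inclusion cancellation J_{a²} ⊃ I_{a²} ⟹ J_a ⊃ I_a for I the principal ideal (η).) -/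
/-- `ξ = O(η)`: `ξ_n ≤ C·η_n` for all `n`, for some `C > 0`. -/
def BigO (ξ η : ℕ → ℝ) : Prop :=
  ∃ C : ℝ, 0 < C ∧ ∀ n, ξ n ≤ C * η n

/-- `nuIdx ξ n` is (the 0-based version of) `ν(ξ)_{n+1} := min{k ≥ 1 : ∑_{i=1}^k ξ_i ≥ (n+1)ξ₁}`. -/
noncomputable def nuIdx (ξ : ℕ → ℝ) (n : ℕ) : ℕ :=
  sInf {k : ℕ | (n + 1 : ℝ) * ξ 0 ≤ ∑ i ∈ Finset.range (k + 1), ξ i}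

/-- `ξ̂_n := (ξ_a)_{ν(ξ)_n}` (0-based indexing). -/
noncomputable def hatSeq (ξ : ℕ → ℝ) (n : ℕ) : ℝ := am ξ (nuIdx ξ n)

/-!
Write `S n = ∑_{j ≤ n} ξ_j` and `T N = ∑_{j ≤ N} (ξ_a)_j`, so that `ξ_a = S/(n+1)` and
`ξ_{a²} = T/(N+1)`. Bounding `(ξ_a)_j` by `ξ₀` for `j < S n / ξ₀`, by `S n / (j+1)` up to `n` and
by `(ξ_a)_n` beyond `n` gives, for every `ξ ∈ c₀*` and `n ≤ N`,
`T N ≤ 2 S n (1 + log (ξ₀ / (ξ_a)_n) + (N - n)/(n + 1))`.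
Each of the conditions (a) and (b) makes this bound sharp for `η`, up to a constant, at some
`N ≥ n` (under (a) at `N = n`; under (b) at `N = ν(η)_t` for a suitable `t`, where `η̂` controls
the third term). If `η_{a²} ≤ K ξ_{a²}` and `r = (η_a)_n / (ξ_a)_n ≥ 1`, comparing the two bounds
gives `c r ≤ 2K (1 + |log (ξ₀/η₀)| + log r)`, which bounds `r` independently of `n`.
-/

open Finset

noncomputable def cumSum (ξ : ℕ → ℝ) (n : ℕ) : ℝ := ∑ j ∈ range (n + 1), ξ j

section CumSum

variable {ξ : ℕ → ℝ} {n : ℕ}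

lemma am_eq_cumSum_div (ξ : ℕ → ℝ) (n : ℕ) : am ξ n = cumSum ξ n / (n + 1) := rfl

lemma cumSum_eq_mul_am (ξ : ℕ → ℝ) (n : ℕ) : cumSum ξ n = (n + 1) * am ξ n := by
  rw [am_eq_cumSum_div]; field_simp

@[simp] lemma cumSum_zero : cumSum ξ 0 = ξ 0 := by simp [cumSum]

lemma cumSum_succ (n : ℕ) : cumSum ξ (n + 1) = cumSum ξ n + ξ (n + 1) :=
  sum_range_succ _ _

lemma cumSum_nonneg (hξ : ∀ i, 0 ≤ ξ i) (n : ℕ) : 0 ≤ cumSum ξ n :=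
  sum_nonneg fun i _ ↦ hξ i

lemma cumSum_mono (hξ : ∀ i, 0 ≤ ξ i) : Monotone (cumSum ξ) :=
  monotone_nat_of_le_succ fun n ↦ by rw [cumSum_succ]; linarith [hξ (n + 1)]

lemma head_le_cumSum (hξ : ∀ i, 0 ≤ ξ i) (n : ℕ) : ξ 0 ≤ cumSum ξ n := by
  simpa using cumSum_mono hξ (Nat.zero_le n)

lemma am_nonneg (hξ : ∀ i, 0 ≤ ξ i) (n : ℕ) : 0 ≤ am ξ n :=
  div_nonneg (cumSum_nonneg hξ n) (by positivity)

lemma cumSum_pos (hξ : ∀ i, 0 ≤ ξ i) (h0 : 0 < ξ 0) (n : ℕ) : 0 < cumSum ξ n :=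
  h0.trans_le (head_le_cumSum hξ n)

lemma am_pos (hξ : ∀ i, 0 ≤ ξ i) (h0 : 0 < ξ 0) (n : ℕ) : 0 < am ξ n :=
  div_pos (cumSum_pos hξ h0 n) (by positivity)

@[simp] lemma am_zero : am ξ 0 = ξ 0 := by simp [am_eq_cumSum_div]

lemma sub_div_succ_nonneg {N : ℕ} (hnN : n ≤ N) : 0 ≤ ((N : ℝ) - n) / (n + 1) :=
  div_nonneg (sub_nonneg.2 (Nat.cast_le.2 hnN)) (by positivity)

lemma Antitone.mul_le_cumSum (hξ : Antitone ξ) (n : ℕ) : (n + 1) * ξ n ≤ cumSum ξ n := by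
  simpa [cumSum] using card_nsmul_le_sum (range (n + 1)) ξ (ξ n)
    fun j hj ↦ hξ (Nat.lt_succ_iff.1 (mem_range.1 hj))

lemma Antitone.cumSum_le (hξ : Antitone ξ) (n : ℕ) : cumSum ξ n ≤ (n + 1) * ξ 0 := by
  simpa [cumSum] using sum_le_card_nsmul (range (n + 1)) ξ (ξ 0) fun j _ ↦ hξ (Nat.zero_le j)

lemma Antitone.am_le_head (hξ : Antitone ξ) (n : ℕ) : am ξ n ≤ ξ 0 := by
  rw [am_eq_cumSum_div, div_le_iff₀ (by positivity)]
  linarith [hξ.cumSum_le n]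

lemma antitone_am (hξ : Antitone ξ) : Antitone (am ξ) := by
  refine antitone_nat_of_succ_le fun n ↦ ?_
  rw [am_eq_cumSum_div, am_eq_cumSum_div, div_le_div_iff₀ (by positivity) (by positivity),
    cumSum_succ]
  have hlast : (n + 1) * ξ (n + 1) ≤ cumSum ξ n := by
    simpa [cumSum] using sum_le_sum fun j (hj : j ∈ range (n + 1)) ↦
      hξ (show j ≤ n + 1 by have := mem_range.1 hj; omega)
  push_cast
  nlinarith

lemma Antitone.cumSum_le_cumSum_am (hξ : Antitone ξ) (n : ℕ) : cumSum ξ n ≤ cumSum (am ξ) n := by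
  simpa [← cumSum_eq_mul_am] using (antitone_am hξ).mul_le_cumSum n

end CumSum

lemma sum_Ico_inv_le_log_div {a b : ℕ} (ha : 0 < a) (hab : a ≤ b) :
    ∑ j ∈ Ico a b, ((j : ℝ) + 1)⁻¹ ≤ Real.log (b / a) := by
  induction b, hab using Nat.le_induction with
  | base => simp
  | succ b hab ih =>
    have hb : (0 : ℝ) < b := by exact_mod_cast ha.trans_le hab
    have hstep : ((b : ℝ) + 1)⁻¹ ≤ Real.log ((b + 1) / b) := by
      have := Real.one_sub_inv_le_log_of_pos (show (0 : ℝ) < (b + 1) / b by positivity)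
      rwa [inv_div, one_sub_div (by positivity), add_sub_cancel_left, one_div] at this
    rw [sum_Ico_succ_top hab, Nat.cast_succ]
    calc _ ≤ Real.log (b / a) + Real.log ((b + 1) / b) := add_le_add ih hstep
      _ = Real.log ((b + 1) / a) := by
        rw [← Real.log_mul (by positivity) (by positivity)]; field_simp

lemma log_div_le_sum_Ico_inv {a b : ℕ} (hab : a ≤ b) :
    Real.log ((b + 1) / (a + 1)) ≤ ∑ j ∈ Ico a b, ((j : ℝ) + 1)⁻¹ := by
  induction b, hab using Nat.le_induction with
  | base => simp
  | succ b hab ih =>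
    have hstep : Real.log ((b + 2) / (b + 1)) ≤ ((b : ℝ) + 1)⁻¹ := by
      have := Real.log_le_sub_one_of_pos (show (0 : ℝ) < (b + 2) / (b + 1) by positivity)
      have hsub : ((b : ℝ) + 2) / (b + 1) - 1 = ((b : ℝ) + 1)⁻¹ := by field_simp; ring
      linarith
    rw [sum_Ico_succ_top hab, Nat.cast_succ]
    calc Real.log ((b + 1 + 1) / (a + 1))
        = Real.log ((b + 1) / (a + 1)) + Real.log ((b + 2) / (b + 1)) := by
          rw [← Real.log_mul (by positivity) (by positivity)]; congr 1; field_simp; ring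
      _ ≤ _ := add_le_add ih hstep

noncomputable def cesaroMajorant (ξ : ℕ → ℝ) (n N : ℕ) : ℝ :=
  cumSum ξ n * (1 + Real.log (ξ 0 / am ξ n) + ((N : ℝ) - n) / (n + 1))

section Majorant

variable {ξ : ℕ → ℝ} {n N : ℕ}

lemma log_head_div_am_nonneg (hξ : Antitone ξ) (hnn : ∀ i, 0 ≤ ξ i) (h0 : 0 < ξ 0)
    (n : ℕ) : 0 ≤ Real.log (ξ 0 / am ξ n) := by
  exact Real.log_nonneg ((one_le_div (am_pos hnn h0 n)).2 (hξ.am_le_head n))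

lemma sum_Ico_am_le_mul_log (hnn : ∀ i, 0 ≤ ξ i) {k : ℕ} (hk : 0 < k) (hkn : k ≤ n + 1) :
    ∑ j ∈ Ico k (n + 1), am ξ j ≤ cumSum ξ n * Real.log ((n + 1) / k) := by
  calc ∑ j ∈ Ico k (n + 1), am ξ j
      ≤ ∑ j ∈ Ico k (n + 1), cumSum ξ n * ((j : ℝ) + 1)⁻¹ := by
        refine sum_le_sum fun j hj ↦ ?_
        rw [am_eq_cumSum_div, div_eq_mul_inv]
        gcongr
        exact cumSum_mono hnn (by have := (mem_Ico.1 hj).2; omega)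
    _ ≤ cumSum ξ n * Real.log ((n + 1) / k) := by
        rw [← mul_sum]
        gcongr
        · exact cumSum_nonneg hnn n
        · simpa using sum_Ico_inv_le_log_div hk hkn

lemma sum_Ico_am_le_mul_am (hξ : Antitone ξ) (hnN : n ≤ N) :
    ∑ j ∈ Ico (n + 1) (N + 1), am ξ j ≤ ((N : ℝ) - n) * am ξ n := by
  calc ∑ j ∈ Ico (n + 1) (N + 1), am ξ j ≤ (Ico (n + 1) (N + 1)).card • am ξ n :=
        sum_le_card_nsmul _ _ _ fun j hj ↦ antitone_am hξ (by have := (mem_Ico.1 hj).1; omega)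
    _ = ((N : ℝ) - n) * am ξ n := by
        rw [Nat.card_Ico, nsmul_eq_mul, Nat.add_sub_add_right, Nat.cast_sub hnN]

lemma cumSum_am_le_cesaroMajorant (hξ : Antitone ξ) (hnn : ∀ i, 0 ≤ ξ i) (h0 : 0 < ξ 0)
    (hnN : n ≤ N) : cumSum (am ξ) N ≤ 2 * cesaroMajorant ξ n N := by
  set S := cumSum ξ n
  have hS : 0 < S := cumSum_pos hnn h0 n
  set k := ⌊S / ξ 0⌋₊
  have hk : 0 < k := Nat.floor_pos.2 ((one_le_div h0).2 (head_le_cumSum hnn n))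
  have hkn : k ≤ n + 1 := Nat.floor_le_of_le <| by
    rw [div_le_iff₀ h0]; exact_mod_cast hξ.cumSum_le n
  have hkS : k * ξ 0 ≤ S := (le_div_iff₀ h0).1 (Nat.floor_le (by positivity))
  have hSk : S / ξ 0 ≤ 2 * k := by
    have := Nat.lt_floor_add_one (S / ξ 0)
    have : (1 : ℝ) ≤ k := by exact_mod_cast hk
    linarith
  have hlow : ∑ j ∈ range k, am ξ j ≤ S := by
    refine le_trans (sum_le_card_nsmul _ _ (ξ 0) fun j _ ↦ hξ.am_le_head j) ?_
    simpa using hkS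
  have hlog : Real.log ((n + 1) / k) ≤ 1 + Real.log (ξ 0 / am ξ n) := by
    have hlog2 : Real.log 2 ≤ 1 := by linarith [Real.log_two_lt_d9]
    have hk' : (0 : ℝ) < k := by exact_mod_cast hk
    rw [← Real.log_le_log_iff (by positivity) (by positivity)] at hSk
    rw [am_eq_cumSum_div, div_div_eq_mul_div, Real.log_div (by positivity) hS.ne',
      Real.log_mul h0.ne' (by positivity), Real.log_div (by positivity) hk'.ne']
    rw [Real.log_div hS.ne' h0.ne', Real.log_mul two_ne_zero hk'.ne'] at hSk
    linarith
  have hsplit : cumSum (am ξ) N = ∑ j ∈ range k, am ξ j + ∑ j ∈ Ico k (n + 1), am ξ j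
      + ∑ j ∈ Ico (n + 1) (N + 1), am ξ j := by
    rw [sum_range_add_sum_Ico _ hkn, sum_range_add_sum_Ico _ (by omega), cumSum]
  have hτ := sub_div_succ_nonneg hnN
  have hmid := sum_Ico_am_le_mul_log hnn hk hkn
  have hhigh := sum_Ico_am_le_mul_am hξ hnN
  rw [am_eq_cumSum_div, mul_div_left_comm] at hhigh
  have hL := log_head_div_am_nonneg hξ hnn h0 n
  rw [hsplit, cesaroMajorant]
  nlinarith [mul_le_mul_of_nonneg_left hlog hS.le, mul_nonneg hS.le hL, mul_nonneg hS.le hτ]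

lemma cesaroMajorant_pos (hξ : Antitone ξ) (hnn : ∀ i, 0 ≤ ξ i) (h0 : 0 < ξ 0)
    (hnN : n ≤ N) : 0 < cesaroMajorant ξ n N := by
  have hτ := sub_div_succ_nonneg hnN
  have := log_head_div_am_nonneg hξ hnn h0 n
  exact mul_pos (cumSum_pos hnn h0 n) (by linarith)

lemma div_mul_cesaroMajorant_le {η : ℕ → ℝ} (hξnn : ∀ i, 0 ≤ ξ i)
    (hξ0 : 0 < ξ 0) (hη : Antitone η) (hηnn : ∀ i, 0 ≤ η i) (hη0 : 0 < η 0)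
    (hle : am ξ n ≤ am η n) (hnN : n ≤ N) :
    am η n / am ξ n * cesaroMajorant ξ n N ≤
      (1 + |Real.log (ξ 0 / η 0)| + Real.log (am η n / am ξ n)) * cesaroMajorant η n N := by
  have hξa := am_pos hξnn hξ0 n
  have hηa := am_pos hηnn hη0 n
  set r := am η n / am ξ n with hr_def
  have hr : 0 ≤ Real.log r := Real.log_nonneg ((one_le_div hξa).2 hle)
  have hlog : Real.log (ξ 0 / am ξ n) =
      Real.log (η 0 / am η n) + Real.log (ξ 0 / η 0) + Real.log r := by
    rw [← Real.log_mul (by positivity) (by positivity),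
      ← Real.log_mul (by positivity) (by positivity)]
    congr 1
    rw [hr_def]; field_simp
  have hcum : r * cumSum ξ n = cumSum η n := by
    rw [cumSum_eq_mul_am, cumSum_eq_mul_am, hr_def]; field_simp
  have hτ := sub_div_succ_nonneg hnN
  have hL := log_head_div_am_nonneg hη hηnn hη0 n
  have hg := le_abs_self (Real.log (ξ 0 / η 0))
  have hg0 := abs_nonneg (Real.log (ξ 0 / η 0))
  rw [cesaroMajorant, cesaroMajorant, ← mul_assoc, hcum, hlog]
  have := cumSum_pos hηnn hη0 n
  rw [mul_comm _ (cumSum η n * _), mul_assoc]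
  gcongr
  nlinarith [mul_nonneg (add_nonneg hL hτ) (add_nonneg hg0 hr)]

lemma exists_le_of_mul_le_add_mul_log {c b : ℝ} (hc : 0 < c) (hb : 0 < b) (a : ℝ) :
    ∃ R, ∀ r > 0, c * r ≤ a + b * Real.log r → r ≤ R := by
  refine ⟨2 * (a + b * |Real.log (c / (2 * b))|) / c, fun r hr h ↦ ?_⟩
  have hlin := Real.log_le_sub_one_of_pos (show 0 < c / (2 * b) * r by positivity)
  rw [Real.log_mul (by positivity) hr.ne'] at hlin
  have hb' : b * Real.log r ≤ c * r / 2 + b * |Real.log (c / (2 * b))| := by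
    have := mul_le_mul_of_nonneg_left hlin hb.le
    have e : b * (c / (2 * b) * r - 1) = c * r / 2 - b := by field_simp
    nlinarith [le_abs_self (Real.log (c / (2 * b))), neg_abs_le (Real.log (c / (2 * b)))]
  rw [le_div_iff₀ hc]
  linarith

end Majorant

def HasCesaroLowerBound (η : ℕ → ℝ) : Prop :=
  ∃ c > 0, ∀ n, ∃ N, n ≤ N ∧ c * cesaroMajorant η n N ≤ cumSum (am η) N

theorem BigO.am_of_am_am {η ξ : ℕ → ℝ} (hη : Antitone η) (hηnn : ∀ i, 0 ≤ η i)
    (hη0 : 0 < η 0) (hlow : HasCesaroLowerBound η) (hξ : Antitone ξ) (hξnn : ∀ i, 0 ≤ ξ i)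
    (hO : BigO (am (am η)) (am (am ξ))) : BigO (am η) (am ξ) := by
  obtain ⟨c, hc, hlow⟩ := hlow
  obtain ⟨K, hK, hO⟩ := hO
  have hξ0 : 0 < ξ 0 := by
    have := hO 0
    simp only [am_zero] at this
    exact pos_of_mul_pos_right (hη0.trans_le this) hK.le
  have hT (N : ℕ) : cumSum (am η) N ≤ K * cumSum (am ξ) N := by
    rw [cumSum_eq_mul_am, cumSum_eq_mul_am (am ξ), mul_left_comm]
    exact mul_le_mul_of_nonneg_left (hO N) (by positivity)
  obtain ⟨R, hR⟩ := exists_le_of_mul_le_add_mul_log hc (by positivity : 0 < 2 * K)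
    (2 * K * (1 + |Real.log (ξ 0 / η 0)|))
  refine ⟨max 1 R, by positivity, fun n ↦ ?_⟩
  have hξa := am_pos hξnn hξ0 n
  rcases le_total (am η n) (am ξ n) with hle | hle
  · exact hle.trans (le_mul_of_one_le_left hξa.le (le_max_left 1 R))
  obtain ⟨N, hnN, hN⟩ := hlow n
  have hηa : 0 < am η n := hξa.trans_le hle
  have hM := cesaroMajorant_pos hη hηnn hη0 hnN
  have hchain : c * cesaroMajorant η n N ≤ 2 * K * cesaroMajorant ξ n N := by
    have := mul_le_mul_of_nonneg_left (cumSum_am_le_cesaroMajorant hξ hξnn hξ0 hnN) hK.le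
    linarith [hT N]
  have hr : am η n / am ξ n ≤ R := by
    refine hR _ (by positivity) (le_of_mul_le_mul_right ?_ hM)
    calc c * (am η n / am ξ n) * cesaroMajorant η n N
        ≤ 2 * K * (am η n / am ξ n * cesaroMajorant ξ n N) := by
          linarith [mul_le_mul_of_nonneg_left hchain (div_pos hηa hξa).le]
      _ ≤ 2 * K * ((1 + |Real.log (ξ 0 / η 0)| + Real.log (am η n / am ξ n))
            * cesaroMajorant η n N) :=
          mul_le_mul_of_nonneg_left (div_mul_cesaroMajorant_le hξnn hξ0 hη hηnn hη0 hle hnN)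
            (by positivity)
      _ = (2 * K * (1 + |Real.log (ξ 0 / η 0)|) + 2 * K * Real.log (am η n / am ξ n))
            * cesaroMajorant η n N := by ring
  calc am η n = am η n / am ξ n * am ξ n := by field_simp
    _ ≤ max 1 R * am ξ n := by gcongr; exact le_max_of_le_right hr

lemma hasCesaroLowerBound_of_log_le {η : ℕ → ℝ} (hη : Antitone η) (hnn : ∀ i, 0 ≤ η i)
    (h0 : 0 < η 0) {c : ℝ} (hc : 0 < c)
    (hlog : ∀ n : ℕ, 1 ≤ n → c * Real.log (n + 1) ≤ am (am η) n / am η n) :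
    HasCesaroLowerBound η := by
  have hT (n : ℕ) : c * Real.log (n + 1) * cumSum η n ≤ cumSum (am η) n := by
    rcases Nat.eq_zero_or_pos n with rfl | hn
    · simpa using cumSum_nonneg (am_nonneg hnn) 0
    have := (le_div_iff₀ (am_pos hnn h0 n)).1 (hlog n hn)
    rw [cumSum_eq_mul_am, cumSum_eq_mul_am (am η)]
    nlinarith [mul_le_mul_of_nonneg_left this (by positivity : (0 : ℝ) ≤ n + 1)]
  refine ⟨min 1 c / 2, by positivity, fun n ↦ ⟨n, le_rfl, ?_⟩⟩
  have hS := cumSum_pos hnn h0 n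
  have hL : Real.log (η 0 / am η n) ≤ Real.log (n + 1) := by
    refine Real.log_le_log (div_pos h0 (am_pos hnn h0 n)) ?_
    rw [am_eq_cumSum_div, div_div_eq_mul_div, div_le_iff₀ hS, mul_comm]
    exact mul_le_mul_of_nonneg_left (head_le_cumSum hnn n) (by positivity)
  have hL0 := log_head_div_am_nonneg hη hnn h0 n
  have hm1 : min 1 c ≤ 1 := min_le_left 1 c
  have hmc : min 1 c ≤ c := min_le_right 1 c
  have hm0 : 0 < min 1 c := lt_min one_pos hc
  rw [cesaroMajorant, sub_self, zero_div, add_zero]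
  nlinarith [hη.cumSum_le_cumSum_am n, hT n, mul_le_mul_of_nonneg_left hL (mul_pos hm0 hS).le,
    mul_le_mul_of_nonneg_right hmc (mul_nonneg hS.le (hL0.trans hL)),
    mul_le_mul_of_nonneg_right hm1 hS.le]

section Condition

variable {η : ℕ → ℝ}

lemma mul_head_le_cumSum_nuIdx (hnn : ∀ i, 0 ≤ η i) (hns : ¬ Summable η) (t : ℕ) :
    (t + 1) * η 0 ≤ cumSum η (nuIdx η t) := by
  have hunb := (not_summable_iff_tendsto_nat_atTop_of_nonneg hnn).1 hns
  obtain ⟨k, hk⟩ := (hunb.eventually_ge_atTop ((t + 1) * η 0)).exists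
  exact Nat.sInf_mem (s := {k : ℕ | (t + 1 : ℝ) * η 0 ≤ ∑ i ∈ range (k + 1), η i})
    ⟨k, hk.trans (sum_le_sum_of_subset_of_nonneg (range_subset_range.2 (by omega))
      fun i _ _ ↦ hnn i)⟩

lemma cumSum_nuIdx_le (hη : Antitone η) (hnn : ∀ i, 0 ≤ η i) (t : ℕ) :
    cumSum η (nuIdx η t) ≤ (t + 2) * η 0 := by
  rcases Nat.eq_zero_or_pos (nuIdx η t) with h | h
  · rw [h, cumSum_zero]
    nlinarith [hnn 0, (Nat.cast_nonneg t : (0 : ℝ) ≤ t)]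
  obtain ⟨k, hk⟩ := Nat.exists_eq_add_of_lt h
  rw [zero_add] at hk
  have hkS : cumSum η k < (t + 1) * η 0 :=
    lt_of_not_ge (Nat.notMem_of_lt_sInf (show k < nuIdx η t by omega))
  rw [hk, cumSum_succ]
  linarith [hη (Nat.zero_le (k + 1))]

lemma succ_nuIdx_mul_le_of_le_hatSeq (hη : Antitone η) (hnn : ∀ i, 0 ≤ η i) {m : ℕ} {C : ℝ}
    (hC : 0 < C) (hb : ∀ n, η n ≤ C * hatSeq η (n / m)) (i : ℕ) :
    (nuIdx η (i / m) + 1) * η i ≤ 2 * C * ((i + 1) * η 0) := by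
  have hS := cumSum_nuIdx_le hη hnn (i / m)
  have ht : ((i / m : ℕ) : ℝ) + 2 ≤ 2 * (i + 1) := by
    have : ((i / m : ℕ) : ℝ) ≤ i := by exact_mod_cast Nat.div_le_self i m
    linarith
  calc (nuIdx η (i / m) + 1) * η i ≤ (nuIdx η (i / m) + 1) * (C * hatSeq η (i / m)) :=
        mul_le_mul_of_nonneg_left (hb i) (by positivity)
    _ = C * cumSum η (nuIdx η (i / m)) := by
        rw [hatSeq, am_eq_cumSum_div]; field_simp
    _ ≤ 2 * C * ((i + 1) * η 0) := by
        nlinarith [mul_le_mul_of_nonneg_right ht (hnn 0)]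

/-- `i` is the last index with `η i ≥ cumSum η n / (2 (n + 1))`, so the terms after it add
up to at most half of `cumSum η n`. -/
lemma exists_le_two_mul_cumSum (hη : Antitone η) (hnn : ∀ i, 0 ≤ η i) (n : ℕ) :
    ∃ i ≤ n, cumSum η n ≤ 2 * (n + 1) * η i ∧ cumSum η n ≤ 2 * cumSum η i := by
  set S := cumSum η n
  let P : ℕ → Prop := fun i ↦ S ≤ 2 * (n + 1) * η i
  have hP0 : P 0 := by
    have := hη.cumSum_le n
    nlinarith [hnn 0, (Nat.cast_nonneg n : (0 : ℝ) ≤ n)]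
  set i := Nat.findGreatest P n
  have hin : i ≤ n := Nat.findGreatest_le n
  refine ⟨i, hin, Nat.findGreatest_spec (Nat.zero_le n) hP0, ?_⟩
  have htail : ∑ j ∈ Ico (i + 1) (n + 1), η j ≤ S / 2 := by
    calc ∑ j ∈ Ico (i + 1) (n + 1), η j ≤ (Ico (i + 1) (n + 1)).card • (S / (2 * (n + 1))) := by
          refine sum_le_card_nsmul _ _ _ fun j hj ↦ ?_
          have hj := mem_Ico.1 hj
          have := Nat.findGreatest_is_greatest (P := P) (n := n) (k := j) (by omega) (by omega)
          rw [le_div_iff₀ (by positivity)]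
          simp only [P, not_le] at this
          linarith
      _ ≤ (n + 1 : ℕ) • (S / (2 * (n + 1))) := by
          gcongr
          · exact div_nonneg (cumSum_nonneg hnn n) (by positivity)
          · simp only [Nat.card_Ico]; omega
      _ = S / 2 := by rw [nsmul_eq_mul]; push_cast; field_simp
  have hsplit : S = cumSum η i + ∑ j ∈ Ico (i + 1) (n + 1), η j :=
    (sum_range_add_sum_Ico η (by omega : i + 1 ≤ n + 1)).symm
  linarith

lemma cumSum_mul_log_le_cumSum_am (hnn : ∀ i, 0 ≤ η i) {i n : ℕ} (hin : i ≤ n) :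
    cumSum η i * Real.log ((n + 1) / (i + 1)) ≤ cumSum (am η) n := by
  have hlog : Real.log ((n + 1) / (i + 1)) ≤ ∑ j ∈ Ico i (n + 1), ((j : ℝ) + 1)⁻¹ := by
    refine le_trans ?_ (log_div_le_sum_Ico_inv (by omega : i ≤ n + 1))
    gcongr
    linarith
  calc cumSum η i * Real.log ((n + 1) / (i + 1))
      ≤ ∑ j ∈ Ico i (n + 1), cumSum η i * ((j : ℝ) + 1)⁻¹ := by
        rw [← mul_sum]; exact mul_le_mul_of_nonneg_left hlog (cumSum_nonneg hnn i)
    _ ≤ ∑ j ∈ Ico i (n + 1), am η j := by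
        refine sum_le_sum fun j hj ↦ ?_
        rw [am_eq_cumSum_div, div_eq_mul_inv]
        gcongr
        exact cumSum_mono hnn (mem_Ico.1 hj).1
    _ ≤ cumSum (am η) n := by
        rw [cumSum, range_eq_Ico]
        exact sum_le_sum_of_subset_of_nonneg (Ico_subset_Ico_left (Nat.zero_le i))
          fun j _ _ ↦ am_nonneg hnn j

lemma cumSum_mul_log_head_div_am_le (hnn : ∀ i, 0 ≤ η i) (h0 : 0 < η 0) {i n : ℕ}
    (hin : i ≤ n) (hi : cumSum η n ≤ 2 * cumSum η i) :
    cumSum η n * Real.log (η 0 / am η n) ≤ 2 * cumSum (am η) n + (i + 1) * η 0 := by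
  have hS : 0 < cumSum η n := cumSum_pos hnn h0 n
  have hsplit : Real.log (η 0 / am η n) =
      Real.log ((n + 1) / (i + 1)) + Real.log ((i + 1) * η 0 / cumSum η n) := by
    rw [← Real.log_mul (by positivity) (by positivity), am_eq_cumSum_div]
    congr 1
    field_simp
  set S := cumSum η n
  -- `S log (a / S) ≤ a - S` bounds the second summand
  have hsecond : S * Real.log ((i + 1) * η 0 / S) ≤ (i + 1) * η 0 := by
    have := Real.log_le_sub_one_of_pos (show 0 < (i + 1) * η 0 / S by positivity)
    have e : S * ((i + 1) * η 0 / S - 1) = (i + 1) * η 0 - S := by field_simp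
    nlinarith [mul_le_mul_of_nonneg_left this hS.le]
  have hfirst : S * Real.log ((n + 1) / (i + 1)) ≤ 2 * cumSum (am η) n := by
    have hlog : 0 ≤ Real.log ((n + 1) / (i + 1)) :=
      Real.log_nonneg ((one_le_div (by positivity)).2 (by exact_mod_cast Nat.succ_le_succ hin))
    nlinarith [cumSum_mul_log_le_cumSum_am hnn hin, mul_le_mul_of_nonneg_right hi hlog]
  rw [hsplit, mul_add]
  linarith

lemma hasCesaroLowerBound_of_le_hatSeq (hη : Antitone η) (hnn : ∀ i, 0 ≤ η i) (h0 : 0 < η 0)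
    (hns : ¬ Summable η) {m : ℕ} (hm : 0 < m) {C : ℝ} (hC : 0 < C)
    (hb : ∀ n, η n ≤ C * hatSeq η (n / m)) : HasCesaroLowerBound η := by
  refine ⟨1 / (3 + m * (1 + 4 * C)), by positivity, fun n ↦ ?_⟩
  obtain ⟨i, hin, hηi, hSi⟩ := exists_le_two_mul_cumSum hη hnn n
  -- condition (b) compares `η i` with the mean of `η` up to `N'`
  set N' := nuIdx η (i / m)
  refine ⟨max n N', le_max_left n N', ?_⟩
  set T := cumSum (am η) (max n N')
  have hTmono : Monotone (cumSum (am η)) := cumSum_mono (am_nonneg hnn)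
  set S := cumSum η n
  have hS : S ≤ T := (hη.cumSum_le_cumSum_am n).trans (hTmono (le_max_left n N'))
  have hSL : S * Real.log (η 0 / am η n) ≤ 2 * T + (i + 1) * η 0 := by
    have := cumSum_mul_log_head_div_am_le hnn h0 hin hSi
    linarith [hTmono (le_max_left n N')]
  have hfar : (i + 1) * η 0 ≤ m * T := by
    have hi : (i : ℝ) + 1 ≤ m * ((i / m : ℕ) + 1) := by
      exact_mod_cast Nat.lt_mul_div_succ i hm
    calc (i + 1) * η 0 ≤ m * (((i / m : ℕ) + 1) * η 0) := by nlinarith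
      _ ≤ m * T := by
        gcongr
        exact (mul_head_le_cumSum_nuIdx hnn hns _).trans
          ((hη.cumSum_le_cumSum_am N').trans (hTmono (le_max_right n N')))
  have hSτ : S * ((max n N' - n : ℝ) / (n + 1)) ≤ 4 * C * ((i + 1) * η 0) := by
    have hτ : (max n N' - n : ℝ) ≤ N' + 1 := by
      rcases le_total n N' with h | h <;> simp [h] <;> linarith
    have hηi' : S / (n + 1) ≤ 2 * η i := by
      rw [div_le_iff₀ (by positivity)]; linarith
    have := succ_nuIdx_mul_le_of_le_hatSeq hη hnn hC hb i
    calc S * ((max n N' - n : ℝ) / (n + 1)) = S / (n + 1) * (max n N' - n : ℝ) := by ring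
      _ ≤ 2 * η i * (N' + 1) := by
        gcongr
        · exact sub_nonneg.2 (Nat.cast_le.2 (le_max_left n N'))
        · linarith [hnn i]
      _ ≤ 4 * C * ((i + 1) * η 0) := by linarith
  rw [cesaroMajorant, one_div, inv_mul_le_iff₀ (by positivity)]
  nlinarith [mul_le_mul_of_nonneg_left hfar (by positivity : (0 : ℝ) ≤ 1 + 4 * C)]

end Condition

theorem stmt_11 (η : ℕ → ℝ) (hη : IsC0Star η) (hpos : 0 < η 0)
    (hcond :
      (∃ c C : ℝ, 0 < c ∧ 0 < C ∧ ∀ n : ℕ, 1 ≤ n →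
        c * Real.log (n + 1) ≤ am (am η) n / am η n ∧
        am (am η) n / am η n ≤ C * Real.log (n + 1)) ∨
      (¬ Summable η ∧ ∃ m : ℕ, 0 < m ∧ ∃ C : ℝ, 0 < C ∧
        (∀ n, hatSeq η n ≤ C * η (n / m)) ∧ (∀ n, η n ≤ C * hatSeq η (n / m)))) :
    ∀ ξ : ℕ → ℝ, IsC0Star ξ → BigO (am (am η)) (am (am ξ)) → BigO (am η) (am ξ) := by
  rintro ξ ⟨hξnn, hξ, -⟩ hO
  obtain ⟨hηnn, hη, -⟩ := hη
  refine BigO.am_of_am_am (antitone_nat_of_succ_le hη) hηnn hpos ?_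
    (antitone_nat_of_succ_le hξ) hξnn hO
  rcases hcond with ⟨c, _, hc, -, hlog⟩ | ⟨hns, m, hm, C, hC, -, hb⟩
  · exact hasCesaroLowerBound_of_log_le (antitone_nat_of_succ_le hη) hηnn hpos hc
      fun n hn ↦ (hlog n hn).1
  · exact hasCesaroLowerBound_of_le_hatSeq (antitone_nat_of_succ_le hη) hηnn hpos hns hm hC hb
end
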